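/- Let (K, val) be a valued field in which every strict unit admits a square root. Then there exists a pseudo-angular component map, i.e. a map p.an : Kˣ → Fˣ satisfying: (1) p.an(u) = π(u) for units u of the valuation ring B; (2) p.an(ux) = π(u)·p.an(x) for u ∈ Bˣ, x ∈ Kˣ; (3) for every g ∈ G and nonzero c ∈ F there is w with val(w) = g and p.an(w) = c; (4) for nonzero x₁, x₂ with x₁+x₂ ≠ 0: if val(x₁) < val(x₂) then p.an(x₁+x₂) = p.an(x₁); if val(x₁) = val(x₂) and p.an(x₁)+p.an(x₂) ≠ 0 then val(x₁+x₂) = val(x₁) and p.an(x₁+x₂) = p.an(x₁)+p.an(x₂); (5) if val(x)·val(y)⁻¹ ∈ G² and p.an(x) = p.an(y) then y = u²x for some u ∈ Kˣ; (6) for all a, u ∈ Kˣ there is k ∈ Fˣ with p.an(au²) = p.an(a)·k². -/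

import Mathlib

/-- A (multiplicatively written) valuation on a field `K` with value group `G`:
`v` is multiplicative and satisfies the ultrametric inequality on nonzero elements,
and is surjective onto `G`.  The value at `0` is irrelevant (the paper's `∞`). -/
structure MulValuation (K : Type*) [Field K] (G : Type*) [CommGroup G] [LinearOrder G] [IsOrderedMonoid G] where
  v : K → G
  map_mul : ∀ ⦃x y : K⦄, x ≠ 0 → y ≠ 0 → v (x * y) = v x * v y
  min_le_map_add : ∀ ⦃x y : K⦄, x ≠ 0 → y ≠ 0 → x + y ≠ 0 → min (v x) (v y) ≤ v (x + y)
  surj : ∀ g : G, ∃ x : K, x ≠ 0 ∧ v x = g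

namespace MulValuation

variable {K : Type*} [Field K] {G : Type*} [CommGroup G] [LinearOrder G] [IsOrderedMonoid G]

/-- The valuation ring `B = {x : val x ≥ e} ∪ {0}`, as a set. -/
def ringSet (V : MulValuation K G) : Set K := {x : K | x = 0 ∨ 1 ≤ V.v x}

/-- `val(Aˣ)`: the set of values of units of a subring `A` of `K`. -/
def unitVals (V : MulValuation K G) (A : Subring K) : Set G :=
  {g : G | ∃ x : K, x ≠ 0 ∧ x ∈ A ∧ x⁻¹ ∈ A ∧ V.v x = g}

end MulValuation

/-- `π : K → F` is a residue homomorphism for `V`: it is a surjective ring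
homomorphism on the valuation ring, whose nonvanishing locus on the valuation ring
is exactly the set of units of the valuation ring. -/
def MulValuation.IsResidue {K : Type*} [Field K] {G : Type*} [CommGroup G] [LinearOrder G] [IsOrderedMonoid G]
    {F : Type*} [Field F] (V : MulValuation K G) (π : K → F) : Prop :=
  π 0 = 0 ∧ π 1 = 1 ∧
  (∀ x y : K, x ∈ V.ringSet → y ∈ V.ringSet → π (x + y) = π x + π y) ∧
  (∀ x y : K, x ∈ V.ringSet → y ∈ V.ringSet → π (x * y) = π x * π y) ∧
  (∀ x : K, x ≠ 0 → x ∈ V.ringSet → (π x ≠ 0 ↔ V.v x = 1)) ∧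
  (∀ c : F, ∃ x ∈ V.ringSet, π x = c)

/-- `pan` is a pseudo-angular component map for `V` (with residue map `π`),
i.e. it satisfies conditions (1)-(6) of the paper (stated on nonzero elements). -/
def MulValuation.IsPseudoAngular {K : Type*} [Field K] {G : Type*} [CommGroup G] [LinearOrder G] [IsOrderedMonoid G]
    {F : Type*} [Field F] (V : MulValuation K G) (π : K → F) (pan : K → F) : Prop :=
  (∀ x : K, x ≠ 0 → pan x ≠ 0) ∧
  (∀ u : K, u ≠ 0 → V.v u = 1 → pan u = π u) ∧
  (∀ u x : K, u ≠ 0 → V.v u = 1 → x ≠ 0 → pan (u * x) = π u * pan x) ∧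
  (∀ (g : G) (c : F), c ≠ 0 → ∃ w : K, w ≠ 0 ∧ V.v w = g ∧ pan w = c) ∧
  (∀ x₁ x₂ : K, x₁ ≠ 0 → x₂ ≠ 0 → x₁ + x₂ ≠ 0 →
    (V.v x₁ < V.v x₂ → pan (x₁ + x₂) = pan x₁) ∧
    (V.v x₁ = V.v x₂ → pan x₁ + pan x₂ ≠ 0 →
      V.v (x₁ + x₂) = V.v x₁ ∧ pan (x₁ + x₂) = pan x₁ + pan x₂)) ∧
  (∀ x y : K, x ≠ 0 → y ≠ 0 → (∃ u : G, V.v x * (V.v y)⁻¹ = u ^ 2) → pan x = pan y →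
    ∃ u : K, u ≠ 0 ∧ y = u ^ 2 * x) ∧
  (∀ a u : K, a ≠ 0 → u ≠ 0 → ∃ k : F, k ≠ 0 ∧ pan (a * u ^ 2) = pan a * k ^ 2)

/-!
Choose a section `c` of the valuation with `c 1 = 1` that respects square classes: `c g₁ / c g₂`
is a square in `Kˣ` whenever `g₁ / g₂` is a square in `G` (take a representative of each class
of `G / G²` and write every `g` as its representative times a square). Then
`pan x = π (x / c (val x))` works. Conditions (1)–(4) follow from `π` being a ring homomorphism
on `B` that vanishes exactly off `Bˣ`; (6) also uses that `c` respects square classes and that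
squaring is injective on `G`. For (5), if `pan x = pan y` then the quotient of the unit parts of
`y` and `x` is a strict unit, hence a square, and `c (val y) / c (val x)` is a square as well.
-/

theorem MonoidHom.exists_section_isSquare_div {A G : Type*} [CommGroup A] [CommGroup G]
    (φ : A →* G) (hφ : Function.Surjective φ) :
    ∃ c : G → A, (∀ g, φ (c g) = g) ∧ c 1 = 1 ∧
      ∀ g₁ g₂, IsSquare (g₁ / g₂) → IsSquare (c g₁ / c g₂) := by
  let ρ : G → G := fun g => (g : G ⧸ Subgroup.square G).out
  have hρ : ∀ g, IsSquare (g / ρ g) := by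
    intro g
    obtain ⟨⟨h, hh⟩, he⟩ := QuotientGroup.mk_out_eq_mul (Subgroup.square G) g
    simpa [ρ, he] using hh.inv
  choose τ hτ using fun g => (isSquare_iff_exists_sq _).mp (hρ g)
  let z := Function.surjInv hφ
  let c₀ : G → A := fun g => z (ρ g) * z (τ g) ^ 2
  have hc₀ : ∀ g, φ (c₀ g) = g := by
    intro g
    simp only [c₀, z, map_mul, map_pow, Function.surjInv_eq, ← hτ, mul_div_cancel]
  refine ⟨fun g => c₀ g / c₀ 1, fun g => by simp [hc₀], div_self' _, ?_⟩
  intro g₁ g₂ h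
  have hρ_eq : ρ g₁ = ρ g₂ := by
    have : (g₁ : G ⧸ Subgroup.square G) = g₂ := by
      rw [QuotientGroup.eq, Subgroup.mem_square, inv_mul_eq_div, ← inv_div]
      exact h.inv
    simp only [ρ, this]
  rw [div_div_div_cancel_right]
  refine ⟨z (τ g₁) / z (τ g₂), ?_⟩
  simp only [c₀, hρ_eq, mul_div_mul_left_eq_div]
  rw [← div_pow, sq]

namespace MulValuation

variable {K : Type*} [Field K] {G : Type*} [CommGroup G] [LinearOrder G] [IsOrderedMonoid G]
  (V : MulValuation K G) {x y : K}

lemma map_one : V.v 1 = 1 := by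
  simpa using (V.map_mul one_ne_zero one_ne_zero).symm

lemma map_div (hx : x ≠ 0) (hy : y ≠ 0) : V.v (x / y) = V.v x / V.v y := by
  rw [eq_div_iff_mul_eq', ← V.map_mul (div_ne_zero hx hy) hy, div_mul_cancel₀ x hy]

lemma map_neg (hx : x ≠ 0) : V.v (-x) = V.v x := by
  have h : V.v (-1) ^ 2 = 1 := by
    rw [sq, ← V.map_mul (neg_ne_zero.2 one_ne_zero) (neg_ne_zero.2 one_ne_zero), neg_mul_neg,
      one_mul, V.map_one]
  rw [neg_eq_neg_one_mul, V.map_mul (neg_ne_zero.2 one_ne_zero) hx, sq_eq_one.mp h, one_mul]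

lemma map_add_of_lt (hx : x ≠ 0) (hy : y ≠ 0) (hlt : V.v x < V.v y) : V.v (x + y) = V.v x := by
  have hxy : x + y ≠ 0 := fun h => by
    rw [eq_neg_of_add_eq_zero_right h, V.map_neg hx] at hlt
    exact hlt.false
  refine le_antisymm ?_ (min_eq_left hlt.le ▸ V.min_le_map_add hx hy hxy)
  by_contra! h
  have := V.min_le_map_add hxy (neg_ne_zero.2 hy) (by simpa using hx)
  rw [add_neg_cancel_right, V.map_neg hy] at this
  exact (lt_min h hlt).not_ge this

def unitsHom : Kˣ →* G where
  toFun u := V.v u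
  map_one' := V.map_one
  map_mul' u w := V.map_mul u.ne_zero w.ne_zero

lemma unitsHom_surjective : Function.Surjective V.unitsHom := fun g =>
  let ⟨x, hx, hv⟩ := V.surj g
  ⟨Units.mk0 x hx, hv⟩

section Residue

variable {F : Type*} [Field F] {V} {π : K → F} {a b : K}

lemma IsResidue.map_add (hπ : V.IsResidue π) (ha : 1 ≤ V.v a) (hb : 1 ≤ V.v b) :
    π (a + b) = π a + π b :=
  hπ.2.2.1 a b (Or.inr ha) (Or.inr hb)

lemma IsResidue.map_mul (hπ : V.IsResidue π) (ha : 1 ≤ V.v a) (hb : 1 ≤ V.v b) :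
    π (a * b) = π a * π b :=
  hπ.2.2.2.1 a b (Or.inr ha) (Or.inr hb)

lemma IsResidue.ne_zero_iff (hπ : V.IsResidue π) (ha : a ≠ 0) (h : 1 ≤ V.v a) :
    π a ≠ 0 ↔ V.v a = 1 :=
  hπ.2.2.2.2.1 a ha (Or.inr h)

lemma IsResidue.ne_zero (hπ : V.IsResidue π) (ha : a ≠ 0) (h : V.v a = 1) : π a ≠ 0 :=
  (hπ.ne_zero_iff ha h.ge).2 h

lemma IsResidue.eq_zero_of_one_lt (hπ : V.IsResidue π) (ha : a ≠ 0) (h : 1 < V.v a) :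
    π a = 0 :=
  not_not.1 fun h' => h.ne' ((hπ.ne_zero_iff ha h.le).1 h')

lemma IsResidue.exists_v_eq_one (hπ : V.IsResidue π) {r : F} (hr : r ≠ 0) :
    ∃ b, b ≠ 0 ∧ V.v b = 1 ∧ π b = r := by
  obtain ⟨b, hb | hb, rfl⟩ := hπ.2.2.2.2.2 r
  · exact absurd (hb ▸ hπ.1) hr
  · have hb0 : b ≠ 0 := by rintro rfl; exact hr hπ.1
    exact ⟨b, hb0, (hπ.ne_zero_iff hb0 hb).1 hr, rfl⟩

lemma IsResidue.v_add_eq_one (hπ : V.IsResidue π) (ha0 : a ≠ 0) (hb0 : b ≠ 0)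
    (ha : V.v a = 1) (hb : V.v b = 1) (h : π a + π b ≠ 0) : V.v (a + b) = 1 := by
  have hab : a + b ≠ 0 := by
    rintro hab
    rw [← hπ.map_add ha.ge hb.ge, hab, hπ.1] at h
    exact h rfl
  have hle : 1 ≤ V.v (a + b) := by simpa [ha, hb] using V.min_le_map_add ha0 hb0 hab
  exact (hπ.ne_zero_iff hab hle).1 (by rwa [hπ.map_add ha.ge hb.ge])

end Residue

structure IsSquareSection (c : G → Kˣ) : Prop where
  v_apply : ∀ g, V.v (c g) = g
  map_one : c 1 = 1
  isSquare_div : ∀ g₁ g₂, IsSquare (g₁ / g₂) → IsSquare (c g₁ / c g₂)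

lemma exists_isSquareSection : ∃ c, V.IsSquareSection c := by
  obtain ⟨c, hc, hc1, hsq⟩ := V.unitsHom.exists_section_isSquare_div V.unitsHom_surjective
  exact ⟨c, hc, hc1, hsq⟩

namespace IsSquareSection

variable {V} {c : G → Kˣ}

lemma v_div (hc : V.IsSquareSection c) (hx : x ≠ 0) (g : G) : V.v (x / c g) = V.v x / g := by
  rw [V.map_div hx (c g).ne_zero, hc.v_apply]

lemma v_div_self (hc : V.IsSquareSection c) (hx : x ≠ 0) : V.v (x / c (V.v x)) = 1 := by
  rw [hc.v_div hx, div_self']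

lemma exists_eq_mul_sq (hc : V.IsSquareSection c) {g₁ g₂ : G} (h : IsSquare (g₁ / g₂)) :
    ∃ q : K, q ≠ 0 ∧ (c g₁ : K) = c g₂ * q ^ 2 := by
  obtain ⟨q, hq⟩ := hc.isSquare_div g₁ g₂ h
  refine ⟨q, q.ne_zero, ?_⟩
  rw [div_eq_iff_eq_mul'] at hq
  simp [hq, sq]

end IsSquareSection

section PseudoAngular

variable {F : Type*} {V} {π : K → F} {c : G → Kˣ}

def pan (π : K → F) (c : G → Kˣ) (x : K) : F := π (x / c (V.v x))

lemma pan_of_v_eq_one (hc : V.IsSquareSection c) (h : V.v x = 1) : V.pan π c x = π x := by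
  simp [pan, h, hc.map_one]

variable [Field F]

lemma pan_ne_zero (hπ : V.IsResidue π) (hc : V.IsSquareSection c) (hx : x ≠ 0) :
    V.pan π c x ≠ 0 :=
  hπ.ne_zero (div_ne_zero hx (c _).ne_zero) (hc.v_div_self hx)

lemma pan_mul_of_v_eq_one (hπ : V.IsResidue π) (hc : V.IsSquareSection c) (hx : x ≠ 0)
    (hy : y ≠ 0) (hxv : V.v x = 1) : V.pan π c (x * y) = π x * V.pan π c y := by
  have hv : V.v (x * y) = V.v y := by rw [V.map_mul hx hy, hxv, one_mul]
  rw [pan, pan, hv, mul_div_assoc, hπ.map_mul hxv.ge (hc.v_div_self hy).ge]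

lemma exists_v_eq_pan_eq (hπ : V.IsResidue π) (hc : V.IsSquareSection c) (g : G) {r : F}
    (hr : r ≠ 0) : ∃ w, w ≠ 0 ∧ V.v w = g ∧ V.pan π c w = r := by
  obtain ⟨b, hb0, hbv, rfl⟩ := hπ.exists_v_eq_one hr
  have hv : V.v (b * c g) = g := by rw [V.map_mul hb0 (c g).ne_zero, hbv, hc.v_apply, one_mul]
  exact ⟨b * c g, mul_ne_zero hb0 (c g).ne_zero, hv, by
    rw [pan, hv, mul_div_cancel_right₀ b (c g).ne_zero]⟩

lemma pan_add_of_lt (hπ : V.IsResidue π) (hc : V.IsSquareSection c) (hx : x ≠ 0) (hy : y ≠ 0)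
    (hlt : V.v x < V.v y) : V.pan π c (x + y) = V.pan π c x := by
  have hy' : 1 < V.v (y / c (V.v x)) := by rwa [hc.v_div hy, one_lt_div']
  rw [pan, pan, V.map_add_of_lt hx hy hlt, add_div,
    hπ.map_add (hc.v_div_self hx).ge hy'.le,
    hπ.eq_zero_of_one_lt (div_ne_zero hy (c _).ne_zero) hy', add_zero]

lemma v_add_eq_and_pan_add_eq (hπ : V.IsResidue π) (hc : V.IsSquareSection c) (hx : x ≠ 0)
    (hy : y ≠ 0) (hxy : V.v x = V.v y) (h : V.pan π c x + V.pan π c y ≠ 0) :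
    V.v (x + y) = V.v x ∧ V.pan π c (x + y) = V.pan π c x + V.pan π c y := by
  have hx' := hc.v_div_self hx
  have hy' : V.v (y / c (V.v x)) = 1 := hxy ▸ hc.v_div_self hy
  have hπsum : π ((x + y) / c (V.v x)) = V.pan π c x + V.pan π c y := by
    rw [add_div, hπ.map_add hx'.ge hy'.ge, pan, pan, hxy]
  have hsum : V.v ((x + y) / c (V.v x)) = 1 := by
    rw [add_div]
    refine hπ.v_add_eq_one (div_ne_zero hx (c _).ne_zero) (div_ne_zero hy (c _).ne_zero)
      hx' hy' ?_
    rwa [← hπ.map_add hx'.ge hy'.ge, ← add_div, hπsum]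
  have hxy0 : x + y ≠ 0 := by
    rintro h0
    apply h
    rw [← hπsum, h0, zero_div, hπ.1]
  have hv : V.v (x + y) = V.v x := by rwa [hc.v_div hxy0, div_eq_one] at hsum
  exact ⟨hv, by rw [pan, hv, hπsum]⟩

lemma exists_eq_sq_mul_of_pan_eq (hπ : V.IsResidue π) (hc : V.IsSquareSection c)
    (hsqrt : ∀ t : K, t ≠ 0 → V.v t = 1 → π t = 1 → ∃ s : K, t = s ^ 2)
    (hx : x ≠ 0) (hy : y ≠ 0) (hxy : IsSquare (V.v x / V.v y))
    (h : V.pan π c x = V.pan π c y) : ∃ u : K, u ≠ 0 ∧ y = u ^ 2 * x := by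
  obtain ⟨q, hq0, hcq⟩ := hc.exists_eq_mul_sq (inv_div (V.v x) (V.v y) ▸ hxy.inv)
  have ha0 : x / c (V.v x) ≠ 0 := div_ne_zero hx (c _).ne_zero
  have hb0 : y / c (V.v y) ≠ 0 := div_ne_zero hy (c _).ne_zero
  have ha := hc.v_div_self hx
  have hb := hc.v_div_self hy
  have ht0 : y / c (V.v y) / (x / c (V.v x)) ≠ 0 := div_ne_zero hb0 ha0
  have ht : V.v (y / c (V.v y) / (x / c (V.v x))) = 1 := by
    rw [V.map_div hb0 ha0, ha, hb, div_one]
  have hπt : π (y / c (V.v y) / (x / c (V.v x))) = 1 := by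
    refine (mul_eq_right₀ (hπ.ne_zero ha0 ha)).1 ?_
    rw [← hπ.map_mul ht.ge ha.ge, div_mul_cancel₀ _ ha0]
    exact h.symm
  obtain ⟨s, hs⟩ := hsqrt _ ht0 ht hπt
  have hs0 : s ≠ 0 := by rintro rfl; simp [hs] at ht0
  refine ⟨s * q, mul_ne_zero hs0 hq0, ?_⟩
  rw [mul_pow, ← hs, hcq]
  field_simp

lemma exists_pan_mul_sq (hπ : V.IsResidue π) (hc : V.IsSquareSection c) (hx : x ≠ 0)
    (hy : y ≠ 0) : ∃ k : F, k ≠ 0 ∧ V.pan π c (x * y ^ 2) = V.pan π c x * k ^ 2 := by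
  have hv : V.v (x * y ^ 2) = V.v x * V.v y ^ 2 := by
    rw [V.map_mul hx (pow_ne_zero 2 hy), sq, V.map_mul hy hy, sq]
  obtain ⟨q, hq0, hcq⟩ := hc.exists_eq_mul_sq (g₁ := V.v (x * y ^ 2)) (g₂ := V.v x)
    ⟨V.v y, by rw [hv, mul_div_cancel_left, sq]⟩
  have hyq0 : y / q ≠ 0 := div_ne_zero hy hq0
  have hyq : V.v (y / q) = 1 := by
    have hval : V.v x * V.v y ^ 2 = V.v x * V.v q ^ 2 := by
      rw [← hv, ← hc.v_apply (V.v (x * y ^ 2)), hcq,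
        V.map_mul (c _).ne_zero (pow_ne_zero 2 hq0), hc.v_apply, sq q, V.map_mul hq0 hq0, sq]
    rw [V.map_div hy hq0, div_eq_one]
    exact pow_left_injective two_ne_zero (mul_left_cancel hval)
  refine ⟨π (y / q), hπ.ne_zero hyq0 hyq, ?_⟩
  have key : x * y ^ 2 / c (V.v (x * y ^ 2)) = x / c (V.v x) * ((y / q) * (y / q)) := by
    rw [hcq]
    field_simp
  rw [pan, key, hπ.map_mul (hc.v_div_self hx).ge (by rw [V.map_mul hyq0 hyq0, hyq, one_mul]),
    hπ.map_mul hyq.ge hyq.ge, pan, sq]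

end PseudoAngular

end MulValuation

theorem stmt9 {K : Type*} [Field K] {G : Type*} [CommGroup G] [LinearOrder G] [IsOrderedMonoid G]
    {F : Type*} [Field F] (V : MulValuation K G) (π : K → F)
    (hres : V.IsResidue π)
    (hsqrt : ∀ x : K, x ≠ 0 → V.v x = 1 → π x = 1 → ∃ y : K, x = y ^ 2) :
    ∃ pan : K → F, V.IsPseudoAngular π pan := by
  obtain ⟨c, hc⟩ := V.exists_isSquareSection
  refine ⟨V.pan π c, fun x hx => MulValuation.pan_ne_zero hres hc hx,
    fun u _ hu => MulValuation.pan_of_v_eq_one hc hu,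
    fun u x hu hvu hx => MulValuation.pan_mul_of_v_eq_one hres hc hu hx hvu,
    fun g r hr => MulValuation.exists_v_eq_pan_eq hres hc g hr,
    fun x₁ x₂ hx₁ hx₂ _ => ⟨MulValuation.pan_add_of_lt hres hc hx₁ hx₂,
      MulValuation.v_add_eq_and_pan_add_eq hres hc hx₁ hx₂⟩,
    fun x y hx hy ⟨u, hu⟩ h => ?_,
    fun a u ha hu => MulValuation.exists_pan_mul_sq hres hc ha hu⟩
  exact MulValuation.exists_eq_sq_mul_of_pan_eq hres hc hsqrt hx hy
    ⟨u, by rw [div_eq_mul_inv, hu, sq]⟩ h
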